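/- Let I be a fusion-closed set of words and let w = ((j_1,ε_1),…,(j_k,ε_k)) ∈ I. Then for every 0 ≤ l ≤ k, writing g_l = a_{j_1}^{ε_1}⋯a_{j_l}^{ε_l} ∈ F_n, the word [g_l] · \overline{[g_l]} (the reduced word of g_l concatenated with its reverse-inverse) belongs to I. -/
import Mathlib


/-- Evaluation map `π`: a word (list of letters `(j, ε)` with `ε : Bool` meaning `+1`/`-1`)
is sent to `a_{j₁}^{ε₁} ⋯ a_{j_k}^{ε_k}` in the free group `F_n`. -/
def evalWord (n : ℕ) (w : List (Fin n × Bool)) : FreeGroup (Fin n) :=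
  (w.map fun p => if p.2 then FreeGroup.of p.1 else (FreeGroup.of p.1)⁻¹).prod

/-- The reverse-inverse `w̄` of a word `w`. -/
def barWord {n : ℕ} (w : List (Fin n × Bool)) : List (Fin n × Bool) :=
  (w.map fun p => (p.1, !p.2)).reverse

/-- The prefix set `P(w)` of a word `w`: evaluations of all initial segments of `w`. -/
def prefixSet (n : ℕ) (w : List (Fin n × Bool)) : Set (FreeGroup (Fin n)) :=
  {g | ∃ p, p <+: w ∧ evalWord n p = g}

/-- The Cayley graph of `F_n`: `g` and `h` are adjacent iff `g⁻¹ * h ∈ {a_j^{±1}}`. -/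
def cayley (n : ℕ) : SimpleGraph (FreeGroup (Fin n)) :=
  SimpleGraph.fromRel (fun g h => ∃ j : Fin n, g⁻¹ * h = FreeGroup.of j)

/-- A set of words is fusion-closed if it contains the empty word, is closed under
reverse-inverse, and `x·s ∈ I`, `s̄·y ∈ I` imply `x·y ∈ I`. -/
def FusionClosed (n : ℕ) (I : Set (List (Fin n × Bool))) : Prop :=
  ([] ∈ I) ∧ (∀ w ∈ I, barWord w ∈ I) ∧
    ∀ x s y : List (Fin n × Bool), x ++ s ∈ I → barWord s ++ y ∈ I → x ++ y ∈ I

/-- `I(Γ,S)`: the set of words `w` with `π(w) ∈ Γ` and `P(w) ⊆ S`. -/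
def Iset (n : ℕ) (Γ S : Set (FreeGroup (Fin n))) : Set (List (Fin n × Bool)) :=
  {w | evalWord n w ∈ Γ ∧ prefixSet n w ⊆ S}


lemma barWord_append {n : ℕ} (x y : List (Fin n × Bool)) :
    barWord (x ++ y) = barWord y ++ barWord x := by
  simp [barWord]

@[simp] lemma map_not_not {n : ℕ} (w : List (Fin n × Bool)) :
    List.map ((fun p : Fin n × Bool => (p.1, !p.2)) ∘ fun p => (p.1, !p.2)) w = w := by
  have : ((fun p : Fin n × Bool => (p.1, !p.2)) ∘ fun p => (p.1, !p.2)) = id := by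
    funext p; simp
  rw [this, List.map_id]

@[simp] lemma barWord_barWord {n : ℕ} (w : List (Fin n × Bool)) :
    barWord (barWord w) = w := by
  simp [barWord]

lemma take_barWord_mem {n : ℕ} {I : Set (List (Fin n × Bool))} (hI : FusionClosed n I)
    {w : List (Fin n × Bool)} (hw : w ∈ I) (l : ℕ) :
    w.take l ++ barWord (w.take l) ∈ I := by
  refine hI.2.2 (w.take l) (w.drop l) (barWord (w.take l)) ?_ ?_
  · rw [List.take_append_drop]; exact hw
  · rw [← barWord_append, List.take_append_drop]; exact hI.2.1 w hw

lemma take_helper {α : Type*} (p Z : List α) (a : α) :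
    (p ++ a :: Z).take (p.length + 1) = p ++ [a] := by
  rw [List.take_append, List.take_of_length_le (by simp)]
  simp

lemma step_mem {n : ℕ} {I : Set (List (Fin n × Bool))} (hI : FusionClosed n I)
    {u u' : List (Fin n × Bool)} (h : FreeGroup.Red.Step u u')
    (hu : u ++ barWord u ∈ I) : u' ++ barWord u' ∈ I := by
  cases h with
  | @not p q x b =>
    have hB : (p ++ [(x, b)]) ++ barWord (p ++ [(x, b)]) ∈ I := by
      have h1 := take_barWord_mem hI hu (p.length + 1)
      have h2 : (p ++ (x, b) :: (x, !b) :: q) ++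
          barWord (p ++ (x, b) :: (x, !b) :: q)
          = p ++ (x, b) :: ((x, !b) :: q ++ barWord (p ++ (x, b) :: (x, !b) :: q)) := by
        simp
      rwa [h2, take_helper] at h1
    have hB' : p ++ ([(x, b), (x, !b)] ++ barWord p) ∈ I := by
      simpa [barWord_append, barWord] using hB
    have hC : p ++ (q ++ barWord q ++ ([(x, b), (x, !b)] ++ barWord p)) ∈ I := by
      refine hI.2.2 p ([(x, b), (x, !b)] ++ barWord p)
        (q ++ barWord q ++ ([(x, b), (x, !b)] ++ barWord p)) hB' ?_
      have hb : barWord ([(x, b), (x, !b)] ++ barWord p) = p ++ [(x, b), (x, !b)] := by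
        simp [barWord_append]; simp [barWord]
      rw [hb]
      simpa [barWord_append, barWord] using hu
    have := hI.2.2 (p ++ (q ++ barWord q)) ([(x, b), (x, !b)] ++ barWord p)
      (barWord p) (by simpa [List.append_assoc] using hC) (by
        have hb : barWord ([(x, b), (x, !b)] ++ barWord p) = p ++ [(x, b), (x, !b)] := by
          simp [barWord_append]; simp [barWord]
        rw [hb]; simpa [List.append_assoc] using hB')
    simpa [barWord_append, List.append_assoc] using this

lemma red_mem {n : ℕ} {I : Set (List (Fin n × Bool))} (hI : FusionClosed n I)
    {u u' : List (Fin n × Bool)} (h : FreeGroup.Red u u')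
    (hu : u ++ barWord u ∈ I) : u' ++ barWord u' ∈ I := by
  induction h with
  | refl => exact hu
  | tail _ hstep ih => exact step_mem hI hstep ih

lemma evalWord_eq_mk {n : ℕ} (w : List (Fin n × Bool)) :
    evalWord n w = FreeGroup.mk w := by
  induction w with
  | nil => rfl
  | cons a L ih =>
    obtain ⟨x, b⟩ := a
    have : FreeGroup.mk ((x, b) :: L) = FreeGroup.mk [(x, b)] * FreeGroup.mk L := by
      rw [FreeGroup.mul_mk]; rfl
    rw [this, ← ih]
    cases b with
    | true =>
      have h : evalWord n ((x, true) :: L) = FreeGroup.of x * evalWord n L := by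
        simp [evalWord]
      rw [h]; rfl
    | false =>
      have h : evalWord n ((x, false) :: L) = (FreeGroup.of x)⁻¹ * evalWord n L := by
        simp [evalWord]
      rw [h]
      congr 1

/-- If `I` is fusion-closed and `w ∈ I`, then for every `l ≤ k`, writing
`g_l = a_{j₁}^{ε₁}⋯a_{j_l}^{ε_l}`, the word `[g_l] · \overline{[g_l]}` belongs to `I`. -/
theorem stmt_7 (n : ℕ) (hn : 1 ≤ n) (I : Set (List (Fin n × Bool)))
    (hI : FusionClosed n I) (w : List (Fin n × Bool)) (hw : w ∈ I)
    (l : ℕ) (hl : l ≤ w.length) :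
    (evalWord n (w.take l)).toWord ++ barWord (evalWord n (w.take l)).toWord ∈ I := by
  have h1 : w.take l ++ barWord (w.take l) ∈ I := take_barWord_mem hI hw l
  have hred : FreeGroup.Red (w.take l) (evalWord n (w.take l)).toWord := by
    rw [evalWord_eq_mk, FreeGroup.toWord_mk]
    exact FreeGroup.reduce.red
  exact red_mem hI hred h1
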